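/- Let φ = (1+√5)/2. For every x ∈ [−1/φ, 1/φ²), the Ito–Sadahiro representation d_IS(x) is neither the maximal nor the minimal element of R_{−φ,{0,1}}(x) with respect to the alternate order; that is, the Ito–Sadahiro (−φ)-representation of x is neither the greedy nor the lazy (−φ)-representation of x. -/

import Mathlib

/-!
The Ito–Sadahiro map `T y = -φ y - d(y)` preserves `[1-φ, 2-φ)`, and its digit `d` is `1` exactly
on `[1-φ, 3-2φ]`. If an orbit point `T^k x` lies in `[φ-2, 0]`, the digit at position `k` can be
flipped: the new remainder `-φ T^k x - (1 - d)` lies in `[-1, φ-1]`, where every point has a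
`(-φ)`-expansion with digits in `{0, 1}`, so the flipped prefix extends to a second representation
of `x`. The flip goes up in the alternate order when `k` is even and `T^k x ∈ [φ-2, 3-2φ]`, or `k`
is odd and `T^k x ∈ (3-2φ, 0]`, and down with the parities swapped. Following the orbit through
the pieces `[1-φ, φ-2)`, `[φ-2, 3-2φ]`, `(3-2φ, 0]`, `(0, 2-φ)` shows that an orbit admitting no
upward flip would have constant digits `c` from some even time on, so that point would be the fixed
point `-c/(φ+1)` of `y ↦ -φ y - c`, which the same piece analysis excludes. Applied to `T x`, the
argument gives a downward flip as well.
-/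

/-- Alternate order on infinite sequences of reals. -/
def AltLt (x y : ℕ → ℝ) : Prop :=
  ∃ k, (∀ i < k, x i = y i) ∧ (-1 : ℝ) ^ (k + 1) * x k < (-1 : ℝ) ^ (k + 1) * y k

theorem AltLt.irrefl (x : ℕ → ℝ) : ¬ AltLt x x := fun ⟨_, _, h⟩ => lt_irrefl _ h

theorem AltLt.asymm {x y : ℕ → ℝ} (hxy : AltLt x y) : ¬ AltLt y x := by
  obtain ⟨k, hk, hlt⟩ := hxy
  rintro ⟨l, hl, hlt'⟩
  rcases lt_trichotomy k l with h | rfl | h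
  · rw [hl k h] at hlt; exact lt_irrefl _ hlt
  · exact lt_asymm hlt hlt'
  · rw [hk l h] at hlt'; exact lt_irrefl _ hlt'

section

open Set Filter Topology

theorem sum_range_div_pow_add_div_pow {β : ℝ} (hβ : β ≠ 0) {u ρ : ℕ → ℝ}
    (hrec : ∀ n, ρ (n + 1) = β * ρ n - u n) (n : ℕ) :
    ∑ i ∈ Finset.range n, u i / β ^ (i + 1) + ρ n / β ^ n = ρ 0 := by
  induction n with
  | zero => simp
  | succ n ih =>
    rw [← ih, Finset.sum_range_succ, hrec n]
    field_simp
    ring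

theorem hasSum_div_pow_of_bounded {β : ℝ} (hβ : 1 < |β|) {u ρ : ℕ → ℝ} {C : ℝ}
    (hρ : ∀ n, |ρ n| ≤ C) (hrec : ∀ n, ρ (n + 1) = β * ρ n - u n) :
    HasSum (fun i => u i / β ^ (i + 1)) (ρ 0) := by
  have hβ0 : β ≠ 0 := abs_pos.mp (one_pos.trans hβ)
  have hr : |β|⁻¹ < 1 := inv_lt_one_of_one_lt₀ hβ
  have hu : ∀ n, |u n| ≤ (|β| + 1) * C := fun n => by
    calc |u n| = |β * ρ n - ρ (n + 1)| := by rw [hrec n]; ring_nf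
      _ ≤ |β| * |ρ n| + |ρ (n + 1)| := by rw [← abs_mul]; exact abs_sub _ _
      _ ≤ (|β| + 1) * C := by nlinarith [hρ n, hρ (n + 1), abs_nonneg β]
  have hsum : Summable (fun i => u i / β ^ (i + 1)) := by
    refine .of_norm_bounded ((summable_geometric_of_lt_one (by positivity) hr).mul_left
      ((|β| + 1) * C)) fun i => ?_
    rw [Real.norm_eq_abs, abs_div, abs_pow, div_eq_mul_inv, ← inv_pow]
    exact mul_le_mul (hu i) (pow_le_pow_of_le_one (by positivity) hr.le (Nat.le_succ i))
      (by positivity) (by nlinarith [hu 0, abs_nonneg (u 0), abs_nonneg β])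
  rw [hsum.hasSum_iff_tendsto_nat]
  have hrem : Tendsto (fun n => ρ n / β ^ n) atTop (𝓝 0) := by
    have hgeom : Tendsto (fun n => C * |β|⁻¹ ^ n) atTop (𝓝 0) := by
      simpa using (tendsto_pow_atTop_nhds_zero_of_lt_one (by positivity) hr).const_mul C
    refine squeeze_zero_norm (fun n => ?_) hgeom
    rw [Real.norm_eq_abs, abs_div, abs_pow, div_eq_mul_inv, ← inv_pow]
    exact mul_le_mul_of_nonneg_right (hρ n) (pow_nonneg (inv_nonneg.mpr (abs_nonneg β)) n)
  have := (tendsto_const_nhds (x := ρ 0)).sub hrem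
  rw [sub_zero] at this
  refine this.congr fun n => ?_
  rw [← sum_range_div_pow_add_div_pow hβ0 hrec n]
  ring

theorem eq_div_sub_one_of_bounded {β : ℝ} (hβ : 1 < |β|) {ρ : ℕ → ℝ} {C c : ℝ}
    (hρ : ∀ n, |ρ n| ≤ C) (hrec : ∀ n, ρ (n + 1) = β * ρ n - c) :
    ρ 0 = c / (β - 1) := by
  have hβ0 : β ≠ 0 := abs_pos.mp (one_pos.trans hβ)
  have hβ1 : β - 1 ≠ 0 := by intro h; rw [sub_eq_zero.mp h] at hβ; norm_num at hβ
  have hgeom := (hasSum_geometric_of_abs_lt_one (r := β⁻¹)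
    (by rw [abs_inv]; exact inv_lt_one_of_one_lt₀ hβ)).mul_left (c * β⁻¹)
  have hterm : (fun i : ℕ => c / β ^ (i + 1)) = fun i => c * β⁻¹ * β⁻¹ ^ i := by
    ext i; rw [div_eq_mul_inv, ← inv_pow, pow_succ]; ring
  have hval : c / (β - 1) = c * β⁻¹ * (1 - β⁻¹)⁻¹ := by
    rw [show 1 - β⁻¹ = (β - 1) / β by field_simp, inv_div]; field_simp
  rw [hval]
  exact (hasSum_div_pow_of_bounded hβ hρ hrec).unique (hterm ▸ hgeom)

theorem Function.iterate_apply_eq_of_eqOn {α : Type*} {f g : α → α} {s : Set α}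
    (hg : MapsTo g s s) (h : EqOn f g s) {x : α} (hx : x ∈ s) (n : ℕ) :
    f^[n] x = g^[n] x := by
  induction n generalizing x with
  | zero => rfl
  | succ n ih => rw [iterate_succ_apply, iterate_succ_apply, h hx, ih (hg hx)]

theorem Function.forall_iterate_of_two_step {α : Type*} {f : α → α} {S p : α → Prop}
    (h : ∀ z, S z → p z ∧ p (f z) ∧ S (f (f z))) {y : α} (hy : S y) (n : ℕ) :
    p (f^[n] y) := by
  induction n using Nat.strong_induction_on generalizing y with
  | _ n ih =>
    match n with
    | 0 => exact (h y hy).1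
    | 1 => exact (h y hy).2.1
    | n + 2 => exact ih n (by omega) (h y hy).2.2

end

namespace Real

open scoped goldenRatio

lemma goldenRatio_mul_self : φ * φ = φ + 1 := by rw [← sq, goldenRatio_sq]

lemma three_halves_lt_goldenRatio : 3 / 2 < φ := by
  nlinarith [goldenRatio_mul_self, goldenRatio_pos]

lemma goldenRatio_lt_five_thirds : φ < 5 / 3 := by
  nlinarith [goldenRatio_mul_self, goldenRatio_pos]

lemma one_div_goldenRatio : 1 / φ = φ - 1 := by
  rw [one_div, inv_goldenRatio, ← one_sub_goldenConj]; ring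

lemma one_div_goldenRatio_sq : 1 / φ ^ 2 = 2 - φ := by
  rw [← one_div_pow, one_div_goldenRatio, sub_sq, goldenRatio_sq]; ring

end Real

namespace ItoSadahiro

open Real Set
open scoped goldenRatio

/-- The Ito–Sadahiro digit `⌊-φ y + 1/φ⌋` on `[-1/φ, 1/φ²) = [1-φ, 2-φ)`
(see `floor_eq_digit`); the threshold is `(φ-2)/φ = 3-2φ`. -/
noncomputable def digit (y : ℝ) : ℝ := if y ≤ 3 - 2 * φ then 1 else 0

noncomputable def transform (y : ℝ) : ℝ := -φ * y - digit y

noncomputable def digits (y : ℝ) (n : ℕ) : ℝ := digit (transform^[n] y)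

lemma digit_eq_zero_or_one (y : ℝ) : digit y = 0 ∨ digit y = 1 := by
  unfold digit; split_ifs <;> simp

lemma transform_of_le {y : ℝ} (h : y ≤ 3 - 2 * φ) : transform y = -φ * y - 1 := by
  simp [transform, digit, h]

lemma transform_of_lt {y : ℝ} (h : 3 - 2 * φ < y) : transform y = -φ * y := by
  simp [transform, digit, not_le.mpr h]

lemma floor_eq_digit {y : ℝ} (hy : y ∈ Ico (1 - φ) (2 - φ)) :
    ((⌊-φ * y + 1 / φ⌋ : ℤ) : ℝ) = digit y := by
  obtain ⟨hy₁, hy₂⟩ := hy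
  have := goldenRatio_mul_self
  unfold digit
  split_ifs with h
  · rw [one_div_goldenRatio, show ⌊-φ * y + (φ - 1)⌋ = 1 by
      rw [Int.floor_eq_iff]; push_cast; constructor <;> nlinarith [goldenRatio_pos]]
    norm_num
  · rw [one_div_goldenRatio, show ⌊-φ * y + (φ - 1)⌋ = 0 by
      rw [Int.floor_eq_iff]; push_cast; constructor <;> nlinarith [goldenRatio_pos]]
    norm_num

lemma mapsTo_transform : MapsTo transform (Ico (1 - φ) (2 - φ)) (Ico (1 - φ) (2 - φ)) := by
  rintro y ⟨hy₁, hy₂⟩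
  have := goldenRatio_mul_self
  rcases le_or_gt y (3 - 2 * φ) with h | h
  · rw [transform_of_le h]; constructor <;> nlinarith [goldenRatio_pos]
  · rw [transform_of_lt h]; constructor <;> nlinarith [goldenRatio_pos]

lemma mapsTo_Ico_Ioc : MapsTo transform (Ico (1 - φ) (φ - 2)) (Ioc (φ - 2) 0) := by
  rintro y ⟨hy₁, hy₂⟩
  have := goldenRatio_mul_self
  rw [transform_of_le (by linarith [three_halves_lt_goldenRatio, goldenRatio_lt_five_thirds])]
  constructor <;> nlinarith [goldenRatio_pos]

lemma mapsTo_Icc_Icc : MapsTo transform (Icc (φ - 2) (3 - 2 * φ)) (Icc (1 - φ) (φ - 2)) := by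
  rintro y ⟨hy₁, hy₂⟩
  have := goldenRatio_mul_self
  rw [transform_of_le hy₂]
  constructor <;> nlinarith [goldenRatio_pos]

lemma mapsTo_Ioc_Ico : MapsTo transform (Ioc (3 - 2 * φ) 0) (Ico 0 (2 - φ)) := by
  rintro y ⟨hy₁, hy₂⟩
  have := goldenRatio_mul_self
  rw [transform_of_lt hy₁]
  constructor <;> nlinarith [goldenRatio_pos]

lemma mapsTo_Ioo_Ioo : MapsTo transform (Ioo 0 (2 - φ)) (Ioo (1 - φ) 0) := by
  rintro y ⟨hy₁, hy₂⟩
  have := goldenRatio_mul_self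
  rw [transform_of_lt (by linarith [three_halves_lt_goldenRatio])]
  constructor <;> nlinarith [goldenRatio_pos]

lemma eq_of_forall_digit_eq {y c : ℝ} (hy : y ∈ Ico (1 - φ) (2 - φ))
    (h : ∀ n, digit (transform^[n] y) = c) : y = -c / (φ + 1) := by
  have hbound : ∀ n, |transform^[n] y| ≤ 1 := fun n => by
    obtain ⟨h₁, h₂⟩ := mapsTo_transform.iterate n hy
    rw [abs_le]; constructor <;> linarith [three_halves_lt_goldenRatio, goldenRatio_lt_two]
  have hφ : 1 < |-φ| := by rw [abs_neg, abs_of_pos goldenRatio_pos]; exact one_lt_goldenRatio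
  have := eq_div_sub_one_of_bounded hφ hbound fun n => by
    rw [Function.iterate_succ_apply', transform, h n]
  rwa [show -φ - 1 = -(φ + 1) by ring, div_neg, ← neg_div] at this

/-- The excluded orbit positions are exactly those where flipping the Ito–Sadahiro digit gives a
larger representation in the alternate order. -/
def NoUpFlip (y : ℝ) : Prop :=
  ∀ m, (transform^[2])^[m] y ∉ Icc (φ - 2) (3 - 2 * φ) ∧
    transform ((transform^[2])^[m] y) ∉ Ioc (3 - 2 * φ) 0

namespace NoUpFlip

variable {y : ℝ}

lemma notMem_Icc (h : NoUpFlip y) : y ∉ Icc (φ - 2) (3 - 2 * φ) := (h 0).1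

lemma transform_notMem_Ioc (h : NoUpFlip y) : transform y ∉ Ioc (3 - 2 * φ) 0 := (h 0).2

lemma transform_transform (h : NoUpFlip y) : NoUpFlip (transform (transform y)) :=
  fun m => h (m + 1)

lemma notMem_Ico (h : NoUpFlip y) : y ∉ Ico (1 - φ) (φ - 2) := by
  intro hy
  have hφ₁ := three_halves_lt_goldenRatio
  have hφ₂ := goldenRatio_lt_five_thirds
  have hstep : ∀ z, NoUpFlip z ∧ z ∈ Ico (1 - φ) (φ - 2) →
      digit z = 1 ∧ digit (transform z) = 1 ∧
        (NoUpFlip (transform (transform z)) ∧ transform (transform z) ∈ Ico (1 - φ) (φ - 2)) := by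
    rintro z ⟨hz, hzA⟩
    obtain ⟨h₁, h₂⟩ := mapsTo_Ico_Ioc hzA
    have hTz : transform z ∈ Icc (φ - 2) (3 - 2 * φ) :=
      ⟨h₁.le, not_lt.mp fun h₃ => hz.transform_notMem_Ioc ⟨h₃, h₂⟩⟩
    obtain ⟨h₃, h₄⟩ := mapsTo_Icc_Icc hTz
    have hz' := hz.transform_transform
    refine ⟨if_pos (by linarith [hzA.2]), if_pos hTz.2, hz', h₃,
      h₄.lt_of_ne fun heq => hz'.notMem_Icc ⟨heq.ge, by linarith⟩⟩
  have hy' : y ∈ Ico (1 - φ) (2 - φ) := ⟨hy.1, by linarith [hy.2, goldenRatio_lt_two]⟩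
  -- all digits are `1`, so `y` is the fixed point `φ - 2` of `z ↦ -φ z - 1`
  have hfix := eq_of_forall_digit_eq hy' (Function.forall_iterate_of_two_step hstep ⟨h, hy⟩)
  rw [eq_div_iff (by linarith)] at hfix
  nlinarith [hy.2, goldenRatio_mul_self]

lemma notMem_Ioc (h : NoUpFlip y) : y ∉ Ioc (3 - 2 * φ) 0 := by
  intro hy
  have hφ₁ := three_halves_lt_goldenRatio
  have hφ₂ := goldenRatio_lt_five_thirds
  have hstep : ∀ z, NoUpFlip z ∧ z ∈ Ioc (3 - 2 * φ) 0 →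
      digit z = 0 ∧ digit (transform z) = 0 ∧
        (NoUpFlip (transform (transform z)) ∧ transform (transform z) ∈ Ioc (3 - 2 * φ) 0) := by
    rintro z ⟨hz, hzQ⟩
    obtain ⟨h₁, h₂⟩ := mapsTo_Ioc_Ico hzQ
    have hTz : transform z ∈ Ioo 0 (2 - φ) := ⟨h₁.lt_of_ne fun heq =>
      hz.transform_notMem_Ioc (by rw [← heq]; exact ⟨by linarith, le_rfl⟩), h₂⟩
    obtain ⟨h₃, h₄⟩ := mapsTo_Ioo_Ioo hTz
    have hz' := hz.transform_transform
    refine ⟨if_neg (not_le.mpr hzQ.1), if_neg (by linarith [hTz.1]), hz', ?_, h₄.le⟩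
    by_contra! hle
    rcases lt_or_ge (transform (transform z)) (φ - 2) with hA | hP
    · exact hz'.notMem_Ico ⟨h₃.le, hA⟩
    · exact hz'.notMem_Icc ⟨hP, hle⟩
  have hy' : y ∈ Ico (1 - φ) (2 - φ) := ⟨by linarith [hy.1], by linarith [hy.2]⟩
  -- all digits are `0`, so `y = 0`, but then `transform y = 0` is an excluded odd position
  have hfix := eq_of_forall_digit_eq hy' (Function.forall_iterate_of_two_step hstep ⟨h, hy⟩)
  rw [neg_zero, zero_div] at hfix
  subst hfix
  exact h.transform_notMem_Ioc (by rw [transform_of_lt hy.1, mul_zero]; exact hy)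

lemma notMem_Ioo (h : NoUpFlip y) : y ∉ Ioo 0 (2 - φ) := by
  intro hy
  have hφ₂ := goldenRatio_lt_five_thirds
  obtain ⟨h₁, h₂⟩ := mapsTo_Ioo_Ioo hy
  have hTy : transform y ≤ 3 - 2 * φ := not_lt.mp fun h₃ => h.transform_notMem_Ioc ⟨h₃, h₂.le⟩
  have hy' := h.transform_transform
  rcases lt_or_ge (transform y) (φ - 2) with hA | hP
  · obtain ⟨h₃, h₄⟩ := mapsTo_Ico_Ioc ⟨h₁.le, hA⟩
    rcases le_or_gt (transform (transform y)) (3 - 2 * φ) with hP' | hQ'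
    · exact hy'.notMem_Icc ⟨h₃.le, hP'⟩
    · exact hy'.notMem_Ioc ⟨hQ', h₄⟩
  · obtain ⟨h₃, h₄⟩ := mapsTo_Icc_Icc ⟨hP, hTy⟩
    rcases h₄.lt_or_eq with hA' | hP'
    · exact hy'.notMem_Ico ⟨h₃, hA'⟩
    · exact hy'.notMem_Icc ⟨hP'.ge, by linarith⟩

end NoUpFlip

lemma not_noUpFlip {y : ℝ} (hy : y ∈ Ico (1 - φ) (2 - φ)) : ¬ NoUpFlip y := by
  intro h
  rcases lt_or_ge y (φ - 2) with hA | hA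
  · exact h.notMem_Ico ⟨hy.1, hA⟩
  rcases le_or_gt y (3 - 2 * φ) with hP | hP
  · exact h.notMem_Icc ⟨hA, hP⟩
  rcases le_or_gt y 0 with hQ | hQ
  · exact h.notMem_Ioc ⟨hP, hQ⟩
  · exact h.notMem_Ioo ⟨hQ, hy.2⟩

lemma exists_upFlip {y : ℝ} (hy : y ∈ Ico (1 - φ) (2 - φ)) :
    ∃ m, transform^[2 * m] y ∈ Icc (φ - 2) (3 - 2 * φ) ∨
      transform^[2 * m + 1] y ∈ Ioc (3 - 2 * φ) 0 := by
  by_contra! h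
  refine not_noUpFlip hy fun m => ?_
  rw [← Function.iterate_mul, ← Function.iterate_succ_apply' transform]
  exact h m

/-- After the flip at time `k`, the digit `[z ≤ 0]` keeps the remainder in `[-1, φ-1]`. -/
noncomputable def flipDigit (k n : ℕ) (z : ℝ) : ℝ :=
  if n < k then digit z else if n = k then 1 - digit z else if z ≤ 0 then 1 else 0

noncomputable def flipRemainder (k : ℕ) (y : ℝ) : ℕ → ℝ
  | 0 => y
  | n + 1 => -φ * flipRemainder k y n - flipDigit k n (flipRemainder k y n)

lemma flipDigit_eq_zero_or_one (k n : ℕ) (z : ℝ) : flipDigit k n z = 0 ∨ flipDigit k n z = 1 := by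
  unfold flipDigit
  rcases digit_eq_zero_or_one z with h | h <;> split_ifs <;> simp [h]

lemma flipRemainder_eq_iterate {k n : ℕ} (hn : n ≤ k) (y : ℝ) :
    flipRemainder k y n = transform^[n] y := by
  induction n with
  | zero => rfl
  | succ n ih =>
    rw [flipRemainder, ih (by omega), flipDigit, if_pos (by omega), Function.iterate_succ_apply',
      transform]

lemma flipRemainder_mem_Icc {k : ℕ} {y : ℝ} (hy : y ∈ Ico (1 - φ) (2 - φ))
    (hk : transform^[k] y ∈ Icc (φ - 2) 0) (n : ℕ) :
    flipRemainder k y n ∈ Icc (-1) (φ - 1) := by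
  have := goldenRatio_mul_self
  have hφ₁ := three_halves_lt_goldenRatio
  have hφ₂ := goldenRatio_lt_five_thirds
  rcases le_or_gt n k with hn | hn
  · obtain ⟨h₁, h₂⟩ := mapsTo_transform.iterate n hy
    rw [flipRemainder_eq_iterate hn]
    constructor <;> linarith
  obtain ⟨n, rfl⟩ := Nat.exists_eq_add_of_lt hn
  induction n with
  | zero =>
    obtain ⟨h₁, h₂⟩ := hk
    rw [flipRemainder, flipRemainder_eq_iterate le_rfl, flipDigit, if_neg (lt_irrefl k),
      if_pos rfl, digit]
    split_ifs <;> constructor <;> nlinarith [goldenRatio_pos]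
  | succ n ih =>
    obtain ⟨h₁, h₂⟩ := ih (by omega)
    rw [show k + (n + 1) + 1 = k + n + 1 + 1 by ring, flipRemainder, flipDigit,
      if_neg (by omega), if_neg (by omega)]
    split_ifs <;> constructor <;> nlinarith [goldenRatio_pos]

lemma exists_hasSum_flip {k : ℕ} {y : ℝ} (hy : y ∈ Ico (1 - φ) (2 - φ))
    (hk : transform^[k] y ∈ Icc (φ - 2) 0) :
    ∃ w : ℕ → ℝ, (∀ i, w i = 0 ∨ w i = 1) ∧ HasSum (fun i => w i / (-φ) ^ (i + 1)) y ∧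
      (∀ i < k, w i = digits y i) ∧ w k = 1 - digits y k := by
  refine ⟨fun n => flipDigit k n (flipRemainder k y n), fun n => flipDigit_eq_zero_or_one _ _ _,
    ?_, fun i hi => ?_, ?_⟩
  · have hbound : ∀ n, |flipRemainder k y n| ≤ 1 := fun n => by
      obtain ⟨h₁, h₂⟩ := flipRemainder_mem_Icc hy hk n
      rw [abs_le]; constructor <;> linarith [goldenRatio_lt_two]
    have hφ : 1 < |-φ| := by rw [abs_neg, abs_of_pos goldenRatio_pos]; exact one_lt_goldenRatio
    exact hasSum_div_pow_of_bounded hφ hbound fun n => rfl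
  · dsimp only
    rw [flipDigit, if_pos hi, flipRemainder_eq_iterate hi.le, digits]
  · dsimp only
    rw [flipDigit, if_neg (lt_irrefl k), if_pos rfl, flipRemainder_eq_iterate le_rfl, digits]

lemma exists_hasSum_digits_altLt {y : ℝ} (hy : y ∈ Ico (1 - φ) (2 - φ)) :
    ∃ w : ℕ → ℝ, (∀ i, w i = 0 ∨ w i = 1) ∧ HasSum (fun i => w i / (-φ) ^ (i + 1)) y ∧
      AltLt (digits y) w := by
  have hφ₁ := three_halves_lt_goldenRatio
  have hφ₂ := goldenRatio_lt_five_thirds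
  obtain ⟨m, hP | hQ⟩ := exists_upFlip hy
  · obtain ⟨w, h01, hsum, hpre, hk⟩ := exists_hasSum_flip hy ⟨hP.1, by linarith [hP.2]⟩
    refine ⟨w, h01, hsum, 2 * m, fun i hi => (hpre i hi).symm, ?_⟩
    rw [hk, digits, digit, if_pos hP.2, pow_succ, pow_mul]
    norm_num
  · obtain ⟨w, h01, hsum, hpre, hk⟩ := exists_hasSum_flip hy ⟨by linarith [hQ.1], hQ.2⟩
    refine ⟨w, h01, hsum, 2 * m + 1, fun i hi => (hpre i hi).symm, ?_⟩
    rw [hk, digits, digit, if_neg (not_le.mpr hQ.1), pow_succ, pow_succ, pow_mul]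
    norm_num

lemma exists_hasSum_altLt_digits {y : ℝ} (hy : y ∈ Ico (1 - φ) (2 - φ)) :
    ∃ w : ℕ → ℝ, (∀ i, w i = 0 ∨ w i = 1) ∧ HasSum (fun i => w i / (-φ) ^ (i + 1)) y ∧
      AltLt w (digits y) := by
  have hφ₁ := three_halves_lt_goldenRatio
  have hφ₂ := goldenRatio_lt_five_thirds
  obtain ⟨m, hP | hQ⟩ := exists_upFlip (mapsTo_transform hy)
  · rw [← Function.iterate_succ_apply] at hP
    obtain ⟨w, h01, hsum, hpre, hk⟩ := exists_hasSum_flip hy ⟨hP.1, by linarith [hP.2]⟩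
    refine ⟨w, h01, hsum, 2 * m + 1, hpre, ?_⟩
    rw [hk, digits, digit, if_pos hP.2, pow_succ, pow_succ, pow_mul]
    norm_num
  · rw [← Function.iterate_succ_apply] at hQ
    obtain ⟨w, h01, hsum, hpre, hk⟩ := exists_hasSum_flip hy ⟨by linarith [hQ.1], hQ.2⟩
    refine ⟨w, h01, hsum, 2 * m + 1 + 1, hpre, ?_⟩
    rw [hk, digits, digit, if_neg (not_le.mpr hQ.1), pow_succ, pow_succ, pow_succ, pow_mul]
    norm_num

end ItoSadahiro

theorem stmt17 (φ : ℝ) (hφ : φ = (1 + Real.sqrt 5) / 2)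
    (TIS : ℝ → ℝ) (hTIS : ∀ x, TIS x = -φ * x - ((⌊-φ * x + 1 / φ⌋ : ℤ) : ℝ))
    (x : ℝ) (hx : x ∈ Set.Ico (-(1 / φ)) (1 / φ ^ 2))
    (dIS : ℕ → ℝ) (hdIS : ∀ k, dIS k = ((⌊-φ * TIS^[k] x + 1 / φ⌋ : ℤ) : ℝ)) :
    -- d_IS(x) is not the greatest element of R_{−φ,{0,1}}(x) in the alternate order
    (¬ ∀ w : ℕ → ℝ,
        ((∀ i, w i = 0 ∨ w i = 1) ∧ x = ∑' i : ℕ, w i / (-φ) ^ (i + 1)) →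
          w = dIS ∨ AltLt w dIS) ∧
    -- d_IS(x) is not the least element of R_{−φ,{0,1}}(x) in the alternate order
    (¬ ∀ w : ℕ → ℝ,
        ((∀ i, w i = 0 ∨ w i = 1) ∧ x = ∑' i : ℕ, w i / (-φ) ^ (i + 1)) →
          w = dIS ∨ AltLt dIS w) := by
  obtain rfl : φ = Real.goldenRatio := hφ
  have hxI : x ∈ Set.Ico (1 - Real.goldenRatio) (2 - Real.goldenRatio) := by
    rwa [Real.one_div_goldenRatio, Real.one_div_goldenRatio_sq, neg_sub] at hx
  have hTIS' : Set.EqOn TIS ItoSadahiro.transform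
      (Set.Ico (1 - Real.goldenRatio) (2 - Real.goldenRatio)) := fun y hy => by rw [hTIS, ItoSadahiro.floor_eq_digit hy, ItoSadahiro.transform]
  obtain rfl : dIS = ItoSadahiro.digits x := funext fun k => by
    rw [hdIS, Function.iterate_apply_eq_of_eqOn ItoSadahiro.mapsTo_transform hTIS' hxI,
      ItoSadahiro.floor_eq_digit (ItoSadahiro.mapsTo_transform.iterate k hxI), ItoSadahiro.digits]
  obtain ⟨w₁, h01₁, hsum₁, hlt₁⟩ := ItoSadahiro.exists_hasSum_digits_altLt hxI
  obtain ⟨w₂, h01₂, hsum₂, hlt₂⟩ := ItoSadahiro.exists_hasSum_altLt_digits hxI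
  refine ⟨fun h => ?_, fun h => ?_⟩
  · rcases h w₁ ⟨h01₁, hsum₁.tsum_eq.symm⟩ with rfl | hgt
    · exact AltLt.irrefl _ hlt₁
    · exact hlt₁.asymm hgt
  · rcases h w₂ ⟨h01₂, hsum₂.tsum_eq.symm⟩ with rfl | hgt
    · exact AltLt.irrefl _ hlt₂
    · exact hlt₂.asymm hgt
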